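/- arXiv:2505.03710 — 3 statements merged into one kernel-verified Lean document; each statement's English description precedes it below -/
import Mathlib

section
/- For probability distributions π and π' over a finite set A, if π(a) ∝ exp(Q(a)) and π'(a) ∝ exp(Q'(a)) for functions Q, Q' : A → ℝ, then ‖π - π'‖₁ ≤ 2·√(‖Q - Q'‖_∞), where ‖π - π'‖₁ = Σ_a |π(a) - π'(a)| and ‖Q - Q'‖_∞ = sup_a |Q(a) - Q'(a)|. -/
/-!
If the normalizer of `Q` is at most that of `Q'`, then `|Q - Q'| ≤ ε` gives the pointwise
domination `softmax Q ≥ exp (-ε) • softmax Q'`. For two probability vectors the `ℓ₁` distance is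
twice the total positive part of `softmax Q' - softmax Q`, hence at most `2 (1 - exp (-ε))`,
and `1 - exp (-ε) ≤ min 1 ε ≤ √ε`.
-/

open Finset

theorem sum_abs_sub_eq_two_mul_sum_max {ι : Type*} (s : Finset ι) {p q : ι → ℝ}
    (hpq : ∑ a ∈ s, p a = ∑ a ∈ s, q a) :
    ∑ a ∈ s, |p a - q a| = 2 * ∑ a ∈ s, max (q a - p a) 0 := by
  have hpoint : ∀ a, |p a - q a| = 2 * max (q a - p a) 0 + (p a - q a) := fun a ↦ by
    rcases le_total (p a) (q a) with h | h
    · rw [abs_of_nonpos (by linarith), max_eq_left (by linarith)]; ring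
    · rw [abs_of_nonneg (by linarith), max_eq_right (by linarith)]; ring
  simp only [hpoint, sum_add_distrib, sum_sub_distrib, hpq, ← mul_sum, sub_self, add_zero]

theorem sum_abs_sub_le_of_mul_le {ι : Type*} (s : Finset ι) {p q : ι → ℝ} {c : ℝ}
    (hp : ∑ a ∈ s, p a = 1) (hq : ∑ a ∈ s, q a = 1) (hq_nonneg : ∀ a, 0 ≤ q a) (hc : c ≤ 1)
    (hdom : ∀ a, c * q a ≤ p a) :
    ∑ a ∈ s, |p a - q a| ≤ 2 * (1 - c) := by
  have hpoint : ∀ a, max (q a - p a) 0 ≤ (1 - c) * q a := fun a ↦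
    max_le (by linarith [hdom a]) (mul_nonneg (by linarith) (hq_nonneg a))
  calc ∑ a ∈ s, |p a - q a| = 2 * ∑ a ∈ s, max (q a - p a) 0 :=
        sum_abs_sub_eq_two_mul_sum_max s (hp.trans hq.symm)
    _ ≤ 2 * ∑ a ∈ s, (1 - c) * q a := by gcongr with a; exact hpoint a
    _ = 2 * (1 - c) := by rw [← mul_sum, hq, mul_one]

theorem Real.one_sub_exp_neg_le_sqrt {x : ℝ} (hx : 0 ≤ x) : 1 - Real.exp (-x) ≤ √x := by
  rcases le_total x 1 with h | h
  · nlinarith [Real.one_sub_le_exp_neg x, Real.sq_sqrt hx, Real.sqrt_nonneg x]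
  · linarith [Real.exp_pos (-x), Real.one_le_sqrt.mpr h]

section Softmax

variable {A : Type*} [Fintype A]

noncomputable def softmax (Q : A → ℝ) (a : A) : ℝ :=
  Real.exp (Q a) / ∑ a', Real.exp (Q a')

theorem softmax_nonneg (Q : A → ℝ) (a : A) : 0 ≤ softmax Q a := by
  unfold softmax; positivity

variable [Nonempty A]

theorem sum_exp_pos (Q : A → ℝ) : 0 < ∑ a, Real.exp (Q a) :=
  sum_pos (fun a _ ↦ Real.exp_pos (Q a)) univ_nonempty

theorem sum_softmax (Q : A → ℝ) : ∑ a, softmax Q a = 1 := by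
  simp only [softmax, ← sum_div, div_self (sum_exp_pos Q).ne']

theorem exp_neg_mul_softmax_le {Q Q' : A → ℝ} {ε : ℝ} (hε : ∀ a, |Q a - Q' a| ≤ ε)
    (hsum : ∑ a, Real.exp (Q a) ≤ ∑ a, Real.exp (Q' a)) (a : A) :
    Real.exp (-ε) * softmax Q' a ≤ softmax Q a := by
  have hQ : Q' a + -ε ≤ Q a := by linarith [(abs_le.mp (hε a)).1]
  calc Real.exp (-ε) * softmax Q' a = Real.exp (Q' a + -ε) / ∑ a', Real.exp (Q' a') := by
        rw [softmax, Real.exp_add]; ring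
    _ ≤ Real.exp (Q a) / ∑ a', Real.exp (Q' a') := by gcongr
    _ ≤ softmax Q a := div_le_div_of_nonneg_left (Real.exp_pos _).le (sum_exp_pos Q) hsum

theorem sum_abs_softmax_sub_le {Q Q' : A → ℝ} {ε : ℝ} (hε : ∀ a, |Q a - Q' a| ≤ ε) :
    ∑ a, |softmax Q a - softmax Q' a| ≤ 2 * (1 - Real.exp (-ε)) := by
  wlog hsum : ∑ a, Real.exp (Q a) ≤ ∑ a, Real.exp (Q' a) generalizing Q Q'
  · simp only [abs_sub_comm (softmax Q _)]
    exact this (fun a ↦ abs_sub_comm (Q a) (Q' a) ▸ hε a) (le_of_not_ge hsum)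
  have hε_nonneg : 0 ≤ ε := (abs_nonneg _).trans (hε (Classical.arbitrary A))
  exact sum_abs_sub_le_of_mul_le univ (sum_softmax Q) (sum_softmax Q') (softmax_nonneg Q')
    (Real.exp_le_one_iff.mpr (neg_nonpos.mpr hε_nonneg)) (exp_neg_mul_softmax_le hε hsum)

end Softmax

/-- ℓ₁ distance between two softmax distributions is at most 2·√(‖Q - Q'‖_∞). -/
theorem stmt_1 {A : Type*} [Fintype A] [Nonempty A] (Q Q' : A → ℝ) :
    ∑ a, |Real.exp (Q a) / (∑ a', Real.exp (Q a')) -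
          Real.exp (Q' a) / (∑ a', Real.exp (Q' a'))| ≤
      2 * Real.sqrt (⨆ a, |Q a - Q' a|) := by
  set ε := ⨆ a, |Q a - Q' a|
  have hε : ∀ a, |Q a - Q' a| ≤ ε := le_ciSup (Set.finite_range _).bddAbove
  have hε_nonneg : 0 ≤ ε := Real.iSup_nonneg fun a ↦ abs_nonneg _
  calc _ ≤ 2 * (1 - Real.exp (-ε)) := sum_abs_softmax_sub_le hε
    _ ≤ 2 * √ε := by gcongr; exact Real.one_sub_exp_neg_le_sqrt hε_nonneg
end

section
/- Let π^{(t)}, t = 1, ..., T+1, be distributions on a finite set A updated by π^{(t+1)}(a) ∝ π^{(t)}(a)·exp(η·f^{(t)}(a)) with f^{(t)} : A → [0, H] and η > 0. Then for any t₁ ≤ t₂ in [T] and any g : A → [0, H], ⟨g, π^{(t₂)} - π^{(t₁)}⟩ ≤ η·H²·(t₂ - t₁). -/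
open Finset

/-! A multiplicative-weights step cannot shrink any coordinate below `1 - η H` times its old
value, since the normaliser is at most `exp (η H)`. As both iterates are probability vectors,
the mass lost by the decreasing coordinates, at most `η H`, equals the mass gained by the others,
so a test function with values in `[0, H]` changes its mean by at most `η H²` per step.
Summing over the `t₂ - t₁` steps gives the bound. -/

section

variable {A : Type*} [Fintype A]

theorem sum_mul_sub_le_mul_sum_of_sub_le {g p q c : A → ℝ} {H : ℝ}
    (hg : ∀ a, 0 ≤ g a ∧ g a ≤ H) (hpq : ∑ a, p a = ∑ a, q a)
    (hc : ∀ a, 0 ≤ c a) (hqp : ∀ a, q a - p a ≤ c a) :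
    ∑ a, g a * (p a - q a) ≤ H * ∑ a, c a :=
  calc ∑ a, g a * (p a - q a)
      ≤ ∑ a, H * (p a - q a + c a) := sum_le_sum fun a _ => by
        nlinarith [hg a, hc a, hqp a]
    _ = H * ∑ a, c a := by
        rw [← mul_sum, sum_add_distrib, sum_sub_distrib, hpq, sub_self, zero_add]

theorem mul_one_sub_le_mul_exp_div_sum {q f : A → ℝ} {η H : ℝ} (hη : 0 ≤ η)
    (hq : ∀ a, 0 ≤ q a) (hq1 : ∑ a, q a = 1) (hf : ∀ a, 0 ≤ f a ∧ f a ≤ H) (a : A) :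
    q a * (1 - η * H) ≤ q a * Real.exp (η * f a) / ∑ b, q b * Real.exp (η * f b) := by
  set Z := ∑ b, q b * Real.exp (η * f b)
  have hexp_ge_one : ∀ b, 1 ≤ Real.exp (η * f b) := fun b =>
    Real.one_le_exp (mul_nonneg hη (hf b).1)
  have hZ_pos : 0 < Z :=
    calc (0 : ℝ) < ∑ b, q b := by rw [hq1]; exact one_pos
      _ ≤ Z := sum_le_sum fun b _ => le_mul_of_one_le_right (hq b) (hexp_ge_one b)
  have hZ_le : Z ≤ Real.exp (η * H) :=
    calc Z ≤ ∑ b, q b * Real.exp (η * H) := sum_le_sum fun b _ =>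
          mul_le_mul_of_nonneg_left
            (Real.exp_le_exp.2 (mul_le_mul_of_nonneg_left (hf b).2 hη)) (hq b)
      _ = Real.exp (η * H) := by rw [← sum_mul, hq1, one_mul]
  calc q a * (1 - η * H)
      ≤ q a * Real.exp (-(η * H)) :=
        mul_le_mul_of_nonneg_left (by linarith [Real.add_one_le_exp (-(η * H))]) (hq a)
    _ = q a / Real.exp (η * H) := by rw [Real.exp_neg, div_eq_mul_inv]
    _ ≤ q a / Z := div_le_div_of_nonneg_left (hq a) hZ_pos hZ_le
    _ ≤ q a * Real.exp (η * f a) / Z := by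
        gcongr
        exact le_mul_of_one_le_right (hq a) (hexp_ge_one a)

end

theorem sub_le_mul_sub_of_forall_succ_sub_le {u : ℕ → ℝ} {C : ℝ}
    (h : ∀ t, u (t + 1) - u t ≤ C) {m n : ℕ} (hmn : m ≤ n) :
    u n - u m ≤ C * ((n : ℝ) - (m : ℝ)) := by
  induction n, hmn using Nat.le_induction with
  | base => simp
  | succ n _ ih =>
    push_cast
    linarith [h n]

theorem stmt_11_general {A : Type*} [Fintype A] (η H : ℝ) (hη : 0 < η) (hH : 0 < H)
    (f : ℕ → A → ℝ) (hf : ∀ t a, 0 ≤ f t a ∧ f t a ≤ H)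
    (π : ℕ → A → ℝ)
    (hpos : ∀ t a, 0 < π t a) (hsum : ∀ t, ∑ a, π t a = 1)
    (hupd : ∀ t a, π (t + 1) a =
      π t a * Real.exp (η * f t a) / ∑ a', π t a' * Real.exp (η * f t a'))
    (t₁ t₂ : ℕ) (h12 : t₁ ≤ t₂)
    (g : A → ℝ) (hg : ∀ a, 0 ≤ g a ∧ g a ≤ H) :
    ∑ a, g a * (π t₂ a - π t₁ a) ≤ η * H ^ 2 * ((t₂ : ℝ) - (t₁ : ℝ)) := by
  have hstep : ∀ t, ∑ a, g a * (π (t + 1) a - π t a) ≤ η * H ^ 2 := fun t =>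
    calc ∑ a, g a * (π (t + 1) a - π t a)
        ≤ H * ∑ a, η * H * π t a := by
          refine sum_mul_sub_le_mul_sum_of_sub_le hg (by rw [hsum, hsum])
            (fun a => by have := hpos t a; positivity) fun a => ?_
          have := mul_one_sub_le_mul_exp_div_sum hη.le (fun a => (hpos t a).le) (hsum t)
            (hf t) a
          rw [hupd t a]
          linarith
      _ = η * H ^ 2 := by rw [← mul_sum, hsum]; ring
  have hmean := sub_le_mul_sub_of_forall_succ_sub_le (u := fun t => ∑ a, g a * π t a)
    (fun t => by simpa only [mul_sub, sum_sub_distrib] using hstep t) h12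
  simpa only [mul_sub, sum_sub_distrib] using hmean

/-- For multiplicative-weights iterates with scores in [0,H],
⟨g, π^{(t₂)} - π^{(t₁)}⟩ ≤ η·H²·(t₂ - t₁) for any g : A → [0,H]. -/
theorem stmt_11 {A : Type*} [Fintype A] (η H : ℝ) (hη : 0 < η) (hH : 0 < H)
    (T : ℕ) (f : ℕ → A → ℝ) (hf : ∀ t a, 0 ≤ f t a ∧ f t a ≤ H)
    (π : ℕ → A → ℝ)
    (hpos : ∀ t a, 0 < π t a) (hsum : ∀ t, ∑ a, π t a = 1)
    (hupd : ∀ t a, π (t + 1) a =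
      π t a * Real.exp (η * f t a) / ∑ a', π t a' * Real.exp (η * f t a'))
    (t₁ t₂ : ℕ) (h12 : t₁ ≤ t₂) (h2T : t₂ ≤ T)
    (g : A → ℝ) (hg : ∀ a, 0 ≤ g a ∧ g a ≤ H) :
    ∑ a, g a * (π t₂ a - π t₁ a) ≤ η * H ^ 2 * ((t₂ : ℝ) - (t₁ : ℝ)) :=
  stmt_11_general η H hη hH f hf π hpos hsum hupd t₁ t₂ h12 g hg
end

section
/- Let ℓ and ℓ̄ be random variables on a probability space with ℓ̄ = E[ℓ | G] for a sub-σ-algebra G, and suppose |ℓ|, |ℓ̄| ≤ H almost surely. Define X = ℓ² - (ℓ - ℓ̄)². Then E[X | G] = ℓ̄² and E[X² | G] ≤ 4H²·ℓ̄². -/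
open MeasureTheory

/-- Variance computation for the TD-error concentration argument:
with ℓ̄ = E[ℓ|G] and X = ℓ² - (ℓ - ℓ̄)², E[X|G] = ℓ̄² and E[X²|G] ≤ 4H²·ℓ̄². -/
theorem stmt_15 {Ω : Type*} [m0 : MeasurableSpace Ω] (μ : Measure Ω)
    [IsProbabilityMeasure μ] (m : MeasurableSpace Ω) (hm : m ≤ m0)
    (ℓ ℓbar : Ω → ℝ) (H : ℝ)
    (hbar : ℓbar =ᵐ[μ] μ[ℓ | m])
    (hℓ : ∀ᵐ ω ∂μ, |ℓ ω| ≤ H) (hℓbar : ∀ᵐ ω ∂μ, |ℓbar ω| ≤ H) :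
    (μ[(fun ω => ℓ ω ^ 2 - (ℓ ω - ℓbar ω) ^ 2) | m] =ᵐ[μ] fun ω => ℓbar ω ^ 2) ∧
    (∀ᵐ ω ∂μ,
      (μ[(fun ω => (ℓ ω ^ 2 - (ℓ ω - ℓbar ω) ^ 2) ^ 2) | m]) ω ≤
        4 * H ^ 2 * ℓbar ω ^ 2) := by
  have hH : 0 ≤ H := by
    obtain ⟨ω, hω⟩ := hℓ.exists
    exact (abs_nonneg _).trans hω
  by_cases hint : Integrable ℓ μ
  case neg =>
    have hg0 : μ[ℓ|m] = 0 := condExp_of_not_integrable hint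
    have hb0 : ℓbar =ᵐ[μ] 0 := hg0 ▸ hbar
    have h1 : (fun ω => ℓ ω ^ 2 - (ℓ ω - ℓbar ω) ^ 2) =ᵐ[μ] (0 : Ω → ℝ) := by
      filter_upwards [hb0] with ω hω
      simp only [Pi.zero_apply] at hω ⊢
      rw [hω]; ring
    have h2 : (fun ω => (ℓ ω ^ 2 - (ℓ ω - ℓbar ω) ^ 2) ^ 2) =ᵐ[μ] (0 : Ω → ℝ) := by
      filter_upwards [hb0] with ω hω
      simp only [Pi.zero_apply] at hω ⊢
      rw [hω]; ring
    constructor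
    · calc μ[(fun ω => ℓ ω ^ 2 - (ℓ ω - ℓbar ω) ^ 2)|m]
          =ᵐ[μ] μ[(0 : Ω → ℝ)|m] := condExp_congr_ae h1
        _ = 0 := condExp_zero
        _ =ᵐ[μ] fun ω => ℓbar ω ^ 2 := by
            filter_upwards [hb0] with ω hω
            simp only [Pi.zero_apply] at hω ⊢
            rw [hω]; ring
    · have h3 : μ[(fun ω => (ℓ ω ^ 2 - (ℓ ω - ℓbar ω) ^ 2) ^ 2)|m] =ᵐ[μ] 0 :=
        (condExp_congr_ae h2).trans (by rw [condExp_zero])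
      filter_upwards [h3] with ω hω
      rw [hω]
      positivity
  case pos =>
    haveI : SigmaFinite (μ.trim hm) := inferInstance
    set g := μ[ℓ|m] with hgdef
    have hgsm : StronglyMeasurable[m] g := stronglyMeasurable_condExp
    have hgm : AEStronglyMeasurable[m0] g μ := (hgsm.mono hm).aestronglyMeasurable
    have hℓm : AEStronglyMeasurable[m0] ℓ μ := hint.1
    have hgb : ∀ᵐ ω ∂μ, |g ω| ≤ H := by
      filter_upwards [hℓbar, hbar] with ω h1 h2
      rw [← h2]; exact h1
    have hgint : Integrable g μ := integrable_condExp
    have hbound : ∀ (f : Ω → ℝ) (C : ℝ), AEStronglyMeasurable[m0] f μ →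
        (∀ᵐ ω ∂μ, |f ω| ≤ C) → Integrable f μ := fun f C hf hb =>
      (integrable_const C).mono' hf (by simpa [Real.norm_eq_abs] using hb)
    -- A = 2ℓ - g
    set A : Ω → ℝ := (2 : ℝ) • ℓ - g with hAdef
    have hAapp : ∀ ω, A ω = 2 * ℓ ω - g ω := fun ω => by
      simp [hAdef, smul_eq_mul]
    have hA_meas : AEStronglyMeasurable[m0] A μ := (hℓm.const_smul (2:ℝ)).sub hgm
    have hA_b : ∀ᵐ ω ∂μ, |A ω| ≤ 3 * H := by
      filter_upwards [hℓ, hgb] with ω h1 h2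
      rw [hAapp]
      rw [abs_le] at h1 h2 ⊢
      constructor <;> linarith [h1.1, h1.2, h2.1, h2.2]
    have hA_int : Integrable A μ := hbound A (3 * H) hA_meas hA_b
    have hgA_int : Integrable (g * A) μ := by
      refine hbound _ (H * (3 * H)) (hgm.mul hA_meas) ?_
      filter_upwards [hgb, hA_b] with ω h1 h2
      rw [Pi.mul_apply, abs_mul]
      exact mul_le_mul h1 h2 (abs_nonneg _) hH
    have hEA : μ[A|m] =ᵐ[μ] g := by
      calc μ[A|m] =ᵐ[μ] μ[(2:ℝ) • ℓ|m] - μ[g|m] := condExp_sub (hint.smul (2:ℝ)) hgint m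
        _ =ᵐ[μ] (2:ℝ) • g - g := by
            refine Filter.EventuallyEq.sub (condExp_smul (2:ℝ) ℓ m) ?_
            rw [condExp_of_stronglyMeasurable hm hgsm hgint]
        _ = g := by funext ω; simp [smul_eq_mul]; ring
    -- B = 4ℓ - g
    set B : Ω → ℝ := (4 : ℝ) • ℓ - g with hBdef
    have hBapp : ∀ ω, B ω = 4 * ℓ ω - g ω := fun ω => by
      simp [hBdef, smul_eq_mul]
    have hB_meas : AEStronglyMeasurable[m0] B μ := (hℓm.const_smul (4:ℝ)).sub hgm
    have hB_b : ∀ᵐ ω ∂μ, |B ω| ≤ 5 * H := by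
      filter_upwards [hℓ, hgb] with ω h1 h2
      rw [hBapp]
      rw [abs_le] at h1 h2 ⊢
      constructor <;> linarith [h1.1, h1.2, h2.1, h2.2]
    have hB_int : Integrable B μ := hbound B (5 * H) hB_meas hB_b
    have hgB_int : Integrable (g * B) μ := by
      refine hbound _ (H * (5 * H)) (hgm.mul hB_meas) ?_
      filter_upwards [hgb, hB_b] with ω h1 h2
      rw [Pi.mul_apply, abs_mul]
      exact mul_le_mul h1 h2 (abs_nonneg _) hH
    have hEB : μ[B|m] =ᵐ[μ] (3:ℝ) • g := by
      calc μ[B|m] =ᵐ[μ] μ[(4:ℝ) • ℓ|m] - μ[g|m] := condExp_sub (hint.smul (4:ℝ)) hgint m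
        _ =ᵐ[μ] (4:ℝ) • g - g := by
            refine Filter.EventuallyEq.sub (condExp_smul (4:ℝ) ℓ m) ?_
            rw [condExp_of_stronglyMeasurable hm hgsm hgint]
        _ = (3:ℝ) • g := by funext ω; simp [smul_eq_mul]; ring
    -- ℓ² bound
    have hℓ2_int : Integrable (ℓ * ℓ) μ := by
      refine hbound _ (H * H) (hℓm.mul hℓm) ?_
      filter_upwards [hℓ] with ω h1
      rw [Pi.mul_apply, abs_mul]
      exact mul_le_mul h1 h1 (abs_nonneg _) hH
    have hℓ2le : μ[ℓ * ℓ|m] ≤ᵐ[μ] fun _ => H ^ 2 := by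
      have hmono := condExp_mono (m := m) hℓ2_int (integrable_const (H ^ 2))
        (g := fun _ => H ^ 2) ?_
      · refine hmono.trans ?_
        rw [condExp_const hm]
      · filter_upwards [hℓ] with ω h1
        have := abs_le.mp h1
        simp only [Pi.mul_apply]
        nlinarith [this.1, this.2]
    -- Part 1
    have hX : (fun ω => ℓ ω ^ 2 - (ℓ ω - ℓbar ω) ^ 2) =ᵐ[μ] g * A := by
      filter_upwards [hbar] with ω h
      rw [Pi.mul_apply, hAapp, h]; ring
    have part1 : μ[(fun ω => ℓ ω ^ 2 - (ℓ ω - ℓbar ω) ^ 2)|m]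
        =ᵐ[μ] fun ω => ℓbar ω ^ 2 := by
      calc μ[(fun ω => ℓ ω ^ 2 - (ℓ ω - ℓbar ω) ^ 2)|m]
          =ᵐ[μ] μ[g * A|m] := condExp_congr_ae hX
        _ =ᵐ[μ] g * μ[A|m] := condExp_mul_of_stronglyMeasurable_left hgsm hgA_int hA_int
        _ =ᵐ[μ] g * g := Filter.EventuallyEq.mul Filter.EventuallyEq.rfl hEA
        _ =ᵐ[μ] fun ω => ℓbar ω ^ 2 := by
            filter_upwards [hbar] with ω h
            rw [Pi.mul_apply, ← h]; ring
    refine ⟨part1, ?_⟩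
    -- Part 2
    have hAA_int : Integrable (A * A) μ := by
      refine hbound _ (3 * H * (3 * H)) (hA_meas.mul hA_meas) ?_
      filter_upwards [hA_b] with ω h1
      rw [Pi.mul_apply, abs_mul]
      exact mul_le_mul h1 h1 (abs_nonneg _) (by linarith)
    have hggAA_int : Integrable ((g * g) * (A * A)) μ := by
      refine hbound _ (H * H * (3 * H * (3 * H))) ((hgm.mul hgm).mul (hA_meas.mul hA_meas)) ?_
      filter_upwards [hgb, hA_b] with ω h1 h2
      simp only [Pi.mul_apply, abs_mul]
      have hg2 : |g ω| * |g ω| ≤ H * H := mul_le_mul h1 h1 (abs_nonneg _) hH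
      have hA2 : |A ω| * |A ω| ≤ 3 * H * (3 * H) :=
        mul_le_mul h2 h2 (abs_nonneg _) (by linarith)
      exact mul_le_mul hg2 hA2 (by positivity) (by positivity)
    have hAAeq : A * A = (4:ℝ) • (ℓ * ℓ) - g * B := by
      funext ω
      simp only [Pi.mul_apply, Pi.sub_apply, Pi.smul_apply, smul_eq_mul, hAapp, hBapp]
      ring
    have hEAA : μ[A * A|m] =ᵐ[μ] fun ω => 4 * (μ[ℓ * ℓ|m]) ω - 3 * g ω ^ 2 := by
      calc μ[A * A|m] = μ[(4:ℝ) • (ℓ * ℓ) - g * B|m] := by rw [hAAeq]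
        _ =ᵐ[μ] μ[(4:ℝ) • (ℓ * ℓ)|m] - μ[g * B|m] :=
            condExp_sub (hℓ2_int.smul (4:ℝ)) hgB_int m
        _ =ᵐ[μ] (4:ℝ) • μ[ℓ * ℓ|m] - g * ((3:ℝ) • g) := by
            exact Filter.EventuallyEq.sub (condExp_smul (4:ℝ) (ℓ * ℓ) m)
              ((condExp_mul_of_stronglyMeasurable_left hgsm hgB_int hB_int).trans
                (Filter.EventuallyEq.mul Filter.EventuallyEq.rfl hEB))
        _ = fun ω => 4 * (μ[ℓ * ℓ|m]) ω - 3 * g ω ^ 2 := by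
            funext ω; simp [smul_eq_mul]; ring
    have hXX : (fun ω => (ℓ ω ^ 2 - (ℓ ω - ℓbar ω) ^ 2) ^ 2) =ᵐ[μ] (g * g) * (A * A) := by
      filter_upwards [hbar] with ω h
      simp only [Pi.mul_apply, hAapp]
      rw [h]; ring
    have hEXX : μ[(fun ω => (ℓ ω ^ 2 - (ℓ ω - ℓbar ω) ^ 2) ^ 2)|m]
        =ᵐ[μ] (g * g) * μ[A * A|m] :=
      (condExp_congr_ae hXX).trans
        (condExp_mul_of_stronglyMeasurable_left (hgsm.mul hgsm) hggAA_int hAA_int)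
    filter_upwards [hEXX, hEAA, hℓ2le, hbar] with ω h1 h2 h3 h4
    rw [h1, Pi.mul_apply, Pi.mul_apply, h2, h4]
    have hgsq : 0 ≤ g ω ^ 2 := sq_nonneg _
    nlinarith [sq_nonneg (g ω), h3]
end
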